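/- Let f ∈ L¹(ℝ³) and let u_f(t,x) := (t/4π) ∫_{S²} f(x + tω) dσ(ω) be the free sine wave propagator applied to f. Then the function x ↦ ∫_0^∞ |u_f(t,x)| dt belongs to weak-L³(ℝ³), with ‖ x ↦ ∫_0^∞ |u_f(t,x)| dt ‖_{L^{3,∞}(ℝ³)} ≤ C ‖f‖_{L¹(ℝ³)} for an absolute constant C; this is the reversed space-time estimate ‖ sin(t√(−Δ))/√(−Δ) f ‖_{L^{3,∞}_x L¹_t} ≲ ‖f‖_{L¹}. -/

import Mathlib

set_option autoImplicit false

open MeasureTheory ENNReal NNReal Real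

noncomputable section

/-- `ℝ³` as a Euclidean space. -/
abbrev R3 : Type := EuclideanSpace ℝ (Fin 3)

/-- The surface measure on the unit sphere `S² ⊂ ℝ³`. -/
def sphereMeasure : Measure (Metric.sphere (0 : R3) 1) :=
  (volume : Measure R3).toSphere

/-- The free sine wave propagator (Kirchhoff formula):
`u_f(t,x) = (t/4π) ∫_{S²} f(x + tω) dσ(ω)`. -/
def sinProp (f : R3 → ℂ) (t : ℝ) (x : R3) : ℂ :=
  (t / (4 * π)) • ∫ ω : Metric.sphere (0 : R3) 1, f (x + t • (ω : R3)) ∂sphereMeasure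

/-- The weak-`L³` quasinorm of a nonnegative (extended-real-valued) function on `ℝ³`:
`sup_{α>0} α · |{x : g(x) > α}|^{1/3}`. -/
def weakL3Norm (g : R3 → ℝ≥0∞) : ℝ≥0∞ :=
  ⨆ (α : ℝ≥0) (_ : 0 < α), (α : ℝ≥0∞) * volume {x : R3 | (α : ℝ≥0∞) < g x} ^ ((1 : ℝ) / 3)


/-!
Since `t / 4π ≤ t`, `|u_f(t,x)| ≤ t ∫_{S²} |f(x + tω)| dσ(ω)`, and integrating in `t` in polar
coordinates centred at `x` turns `∫_0^∞ |u_f(t,x)| dt` into at most the potential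
`∫ |f(y)| / |y - x| dy`. Its kernel `|z|⁻¹` is in weak `L³`: the part of the kernel inside the
ball of radius `R` has `L¹` norm at most `σ(S²) R²` and the part outside is bounded by `1 / R`.
Chebyshev's inequality for the inner part, with `R = 2 ‖f‖₁ / α`, gives
`α³ |{potential > α}| ≤ 8 σ(S²) ‖f‖₁³ = 32π ‖f‖₁³`.
-/

open Set Metric

theorem lintegral_eq_lintegral_Ioi_mul_lintegral_toSphere {E : Type*} [NormedAddCommGroup E]
    [InnerProductSpace ℝ E] [FiniteDimensional ℝ E] [Nontrivial E] [MeasurableSpace E]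
    [BorelSpace E] (μ : Measure E) [μ.IsAddHaarMeasure] {g : E → ℝ≥0∞} (hg : Measurable g) :
    ∫⁻ y, g y ∂μ = ∫⁻ t in Ioi (0 : ℝ),
      ENNReal.ofReal (t ^ (Module.finrank ℝ E - 1)) * ∫⁻ ω, g (t • (ω : E)) ∂μ.toSphere := by
  have hpolar := μ.measurePreserving_homeomorphUnitSphereProd.lintegral_comp_emb
    (Homeomorph.measurableEmbedding _) (fun p => g ((p.2 : ℝ) • (p.1 : E)))
  calc ∫⁻ y, g y ∂μ = ∫⁻ y : ({0}ᶜ : Set E), g y ∂μ.comap (↑) := by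
        rw [lintegral_subtype_comap (measurableSet_singleton _).compl, restrict_compl_singleton]
    _ = ∫⁻ p, g ((p.2 : ℝ) • (p.1 : E)) ∂μ.toSphere.prod (.volumeIoiPow _) := by
        rw [← hpolar]
        refine lintegral_congr fun y => ?_
        simp [smul_smul, mul_inv_cancel₀ (norm_ne_zero_iff.2 y.2)]
    _ = ∫⁻ t, ∫⁻ ω, g ((t : ℝ) • (ω : E)) ∂μ.toSphere ∂.volumeIoiPow _ :=
        lintegral_prod_symm _ (by fun_prop)
    _ = _ := by
        rw [Measure.volumeIoiPow, lintegral_withDensity_eq_lintegral_mul _ (by fun_prop)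
          (by fun_prop)]
        exact lintegral_subtype_comap measurableSet_Ioi
          (fun t => ENNReal.ofReal (t ^ _) * ∫⁻ ω, g (t • (ω : E)) ∂μ.toSphere)

theorem lintegral_lintegral_mul_sub {G : Type*} [MeasurableSpace G] [AddGroup G]
    [MeasurableAdd₂ G] [MeasurableNeg G] (μ : Measure G) [SFinite μ] [μ.IsAddLeftInvariant]
    [μ.IsNegInvariant] {φ K : G → ℝ≥0∞} (hφ : Measurable φ) (hK : Measurable K) :
    ∫⁻ x, ∫⁻ y, φ y * K (y - x) ∂μ ∂μ = (∫⁻ y, φ y ∂μ) * ∫⁻ z, K z ∂μ := by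
  rw [lintegral_lintegral_swap (by fun_prop), ← lintegral_mul_const _ hφ]
  refine lintegral_congr fun y => ?_
  rw [lintegral_const_mul _ (by fun_prop), lintegral_sub_left_eq_self K y]

theorem AEMeasurable.exists_measurable_ge_lintegral_eq {α : Type*} [MeasurableSpace α]
    {μ : Measure α} {f : α → ℝ≥0∞} (hf : AEMeasurable f μ) :
    ∃ g, Measurable g ∧ f ≤ g ∧ ∫⁻ x, g x ∂μ = ∫⁻ x, f x ∂μ := by
  set N := toMeasurable μ {x | f x ≠ hf.mk f x}
  have hN : μ N = 0 := by rw [measure_toMeasurable]; exact ae_iff.1 hf.ae_eq_mk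
  refine ⟨N.indicator ⊤ + hf.mk f,
    (measurable_const.indicator (measurableSet_toMeasurable _ _)).add hf.measurable_mk,
    fun x => ?_, lintegral_congr_ae ?_⟩
  · by_cases hx : x ∈ N
    · simp [hx]
    · simpa [hx] using (not_not.1 fun h => hx (subset_toMeasurable _ _ h)).le
  · filter_upwards [measure_eq_zero_iff_ae_notMem.1 hN, hf.ae_eq_mk] with x hx hfx
    simp [hx, hfx]

theorem weakL3Norm_mono {g h : R3 → ℝ≥0∞} (hgh : g ≤ h) : weakL3Norm g ≤ weakL3Norm h :=
  iSup₂_mono fun _ _ =>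
    mul_le_mul_right (ENNReal.rpow_le_rpow (measure_mono fun _ hx => lt_of_lt_of_le hx (hgh _))
      (by norm_num)) _

theorem weakL3Norm_le_of_forall_pow_three_mul_le {g : R3 → ℝ≥0∞} {c I : ℝ≥0∞}
    (h : ∀ α : ℝ≥0, 0 < α → (α : ℝ≥0∞) ^ 3 * volume {x | (α : ℝ≥0∞) < g x} ≤ c * I ^ 3) :
    weakL3Norm g ≤ c ^ ((1 : ℝ) / 3) * I := by
  have cube_root (a : ℝ≥0∞) : (a ^ 3) ^ ((1 : ℝ) / 3) = a := by
    rw [← ENNReal.rpow_natCast, ← ENNReal.rpow_mul]; norm_num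
  refine iSup₂_le fun α hα => ?_
  calc (α : ℝ≥0∞) * volume {x | (α : ℝ≥0∞) < g x} ^ ((1 : ℝ) / 3)
      = ((α : ℝ≥0∞) ^ 3 * volume {x | (α : ℝ≥0∞) < g x}) ^ ((1 : ℝ) / 3) := by
        rw [ENNReal.mul_rpow_of_nonneg _ _ (by norm_num), cube_root]
    _ ≤ (c * I ^ 3) ^ ((1 : ℝ) / 3) := ENNReal.rpow_le_rpow (h α hα) (by norm_num)
    _ = c ^ ((1 : ℝ) / 3) * I := by rw [ENNReal.mul_rpow_of_nonneg _ _ (by norm_num), cube_root]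

theorem sphereMeasure_univ : sphereMeasure univ = ENNReal.ofReal (4 * π) := by
  rw [sphereMeasure, Measure.toSphere_apply_univ, EuclideanSpace.volume_ball_fin_three,
    ENNReal.ofReal_one, one_pow, one_mul, finrank_euclideanSpace_fin, Nat.cast_ofNat,
    ← ENNReal.ofReal_ofNat 3, ← ENNReal.ofReal_mul (by norm_num)]
  ring_nf

theorem enorm_smul_coe_sphere {t : ℝ} (ht : 0 ≤ t) (ω : sphere (0 : R3) 1) :
    ‖t • (ω : R3)‖ₑ = ENNReal.ofReal t := by
  rw [← ofReal_norm, norm_smul, norm_eq_of_mem_sphere ω, mul_one, Real.norm_of_nonneg ht]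

-- The Newtonian potential of `φ`, without its normalising factor `1 / (4π)`.
def newtonPotential (φ : R3 → ℝ≥0∞) (x : R3) : ℝ≥0∞ :=
  ∫⁻ y, φ y * ‖y - x‖ₑ⁻¹

theorem lintegral_Ioi_mul_lintegral_sphere_eq_newtonPotential {φ : R3 → ℝ≥0∞}
    (hφ : Measurable φ) (x : R3) :
    ∫⁻ t in Ioi (0 : ℝ), ENNReal.ofReal t * ∫⁻ ω, φ (x + t • (ω : R3)) ∂sphereMeasure =
      newtonPotential φ x := by
  have hdim : Module.finrank ℝ R3 - 1 = 2 := by simp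
  rw [newtonPotential, ← lintegral_add_left_eq_self _ x,
    lintegral_eq_lintegral_Ioi_mul_lintegral_toSphere volume (by fun_prop), hdim]
  refine setLIntegral_congr_fun measurableSet_Ioi fun t (ht : 0 < t) => ?_
  simp only [add_sub_cancel_left, enorm_smul_coe_sphere ht.le, lintegral_mul_const' _ _
    (ENNReal.inv_ne_top.2 (ENNReal.ofReal_pos.2 ht).ne')]
  rw [sphereMeasure, ENNReal.ofReal_pow ht.le, pow_two, mul_right_comm, mul_assoc, mul_assoc,
    ENNReal.inv_mul_cancel (ENNReal.ofReal_pos.2 ht).ne' ENNReal.ofReal_ne_top, mul_one]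

theorem enorm_sinProp_le (f : R3 → ℂ) {t : ℝ} (ht : 0 ≤ t) (x : R3) :
    ‖sinProp f t x‖ₑ ≤ ENNReal.ofReal t * ∫⁻ ω, ‖f (x + t • (ω : R3))‖ₑ ∂sphereMeasure := by
  rw [sinProp, enorm_smul, Real.enorm_eq_ofReal (by positivity)]
  gcongr
  · exact div_le_self ht (by linarith [pi_gt_three])
  · exact enorm_integral_le_lintegral_enorm _

theorem lintegral_enorm_sinProp_le_newtonPotential {f : R3 → ℂ} {φ : R3 → ℝ≥0∞}
    (hφ : Measurable φ) (hfφ : ∀ y, ‖f y‖ₑ ≤ φ y) (x : R3) :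
    ∫⁻ t in Ioi (0 : ℝ), ‖sinProp f t x‖ₑ ≤ newtonPotential φ x := by
  rw [← lintegral_Ioi_mul_lintegral_sphere_eq_newtonPotential hφ x]
  refine setLIntegral_mono' measurableSet_Ioi fun t (ht : 0 < t) => ?_
  exact (enorm_sinProp_le f ht.le x).trans (by gcongr with ω; exact hfφ _)

theorem lintegral_inv_enorm_ball_le (R : ℝ) :
    ∫⁻ z in ball (0 : R3) R, ‖z‖ₑ⁻¹ ≤ sphereMeasure univ * ENNReal.ofReal R ^ 2 := by
  have hdim : Module.finrank ℝ R3 - 1 = 2 := by simp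
  rw [← lintegral_indicator measurableSet_ball, lintegral_eq_lintegral_Ioi_mul_lintegral_toSphere
    volume ((by fun_prop : Measurable fun z : R3 => ‖z‖ₑ⁻¹).indicator measurableSet_ball), hdim]
  have hradial : ∀ t ∈ Ioi (0 : ℝ), ENNReal.ofReal (t ^ 2) *
      ∫⁻ ω, (ball (0 : R3) R).indicator (‖·‖ₑ⁻¹) (t • (ω : R3)) ∂(volume : Measure R3).toSphere ≤
        (Iio R).indicator (fun _ => ENNReal.ofReal R * sphereMeasure univ) t := by
    intro t (ht : 0 < t)
    have hball (ω : sphere (0 : R3) 1) : t • (ω : R3) ∈ ball 0 R ↔ t < R := by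
      rw [mem_ball_zero_iff, norm_smul, norm_eq_of_mem_sphere ω, mul_one,
        Real.norm_of_nonneg ht.le]
    by_cases htR : t < R
    · simp only [indicator, hball, htR, if_true, enorm_smul_coe_sphere ht.le, lintegral_const,
        Set.mem_Iio]
      rw [ENNReal.ofReal_pow ht.le, pow_two, ← mul_assoc, mul_assoc (ENNReal.ofReal t),
        ENNReal.mul_inv_cancel (ENNReal.ofReal_pos.2 ht).ne' ENNReal.ofReal_ne_top, mul_one,
        sphereMeasure]
      gcongr
    · simp [indicator, hball, htR]
  refine (setLIntegral_mono' measurableSet_Ioi hradial).trans ?_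
  rw [lintegral_indicator measurableSet_Iio, setLIntegral_const,
    Measure.restrict_apply measurableSet_Iio, Iio_inter_Ioi, Real.volume_Ioo, sub_zero]
  exact le_of_eq (by ring)

theorem newtonPotential_le_add {φ : R3 → ℝ≥0∞} (hφ : Measurable φ) (R : ℝ) (x : R3) :
    newtonPotential φ x ≤ (∫⁻ y, φ y * (ball (0 : R3) R).indicator (‖·‖ₑ⁻¹) (y - x)) +
      (∫⁻ y, φ y) * (ENNReal.ofReal R)⁻¹ := by
  rw [newtonPotential, ← lintegral_add_compl _ (measurableSet_ball (x := x) (ε := R))]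
  refine add_le_add ?_ ?_
  · rw [← lintegral_indicator measurableSet_ball]
    refine lintegral_mono fun y => ?_
    by_cases hy : y ∈ ball x R
    · have hy' : y - x ∈ ball (0 : R3) R := by rwa [mem_ball_zero_iff, ← dist_eq_norm]
      simp [hy, hy']
    · simp [hy]
  · refine (setLIntegral_mono' measurableSet_ball.compl fun y hy => ?_).trans
      ((setLIntegral_le_lintegral _ _).trans (lintegral_mul_const _ hφ).le)
    have hRy : ENNReal.ofReal R ≤ ‖y - x‖ₑ := by
      rw [← ofReal_norm, ← dist_eq_norm]
      exact ENNReal.ofReal_le_ofReal (not_lt.1 hy)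
    exact mul_le_mul_right (ENNReal.inv_le_inv.2 hRy) _

theorem mul_volume_lt_newtonPotential_le {φ : R3 → ℝ≥0∞} (hφ : Measurable φ) (R : ℝ)
    (a : ℝ≥0∞) :
    a * volume {x | a + (∫⁻ y, φ y) * (ENNReal.ofReal R)⁻¹ < newtonPotential φ x} ≤
      (∫⁻ y, φ y) * (sphereMeasure univ * ENNReal.ofReal R ^ 2) := by
  set K : R3 → ℝ≥0∞ := (ball (0 : R3) R).indicator (‖·‖ₑ⁻¹)
  have hK : Measurable K :=
    (by fun_prop : Measurable fun z : R3 => ‖z‖ₑ⁻¹).indicator measurableSet_ball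
  have hnear : {x | a + (∫⁻ y, φ y) * (ENNReal.ofReal R)⁻¹ < newtonPotential φ x} ⊆
      {x | a ≤ ∫⁻ y, φ y * K (y - x)} := fun x hx =>
    (lt_of_add_lt_add_right (hx.trans_le (newtonPotential_le_add hφ R x))).le
  calc a * volume {x | a + (∫⁻ y, φ y) * (ENNReal.ofReal R)⁻¹ < newtonPotential φ x}
      ≤ a * volume {x | a ≤ ∫⁻ y, φ y * K (y - x)} := by gcongr
    _ ≤ ∫⁻ x, ∫⁻ y, φ y * K (y - x) :=
        mul_meas_ge_le_lintegral₀ (Measurable.lintegral_prod_right (by fun_prop)).aemeasurable _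
    _ = (∫⁻ y, φ y) * ∫⁻ z, K z := lintegral_lintegral_mul_sub volume hφ hK
    _ ≤ (∫⁻ y, φ y) * (sphereMeasure univ * ENNReal.ofReal R ^ 2) := by
        gcongr
        rw [lintegral_indicator measurableSet_ball]
        exact lintegral_inv_enorm_ball_le R

theorem pow_three_mul_volume_lt_newtonPotential_le {φ : R3 → ℝ≥0∞} (hφ : Measurable φ)
    (hI : ∫⁻ y, φ y ≠ ∞) {α : ℝ≥0} (hα : 0 < α) :
    (α : ℝ≥0∞) ^ 3 * volume {x | (α : ℝ≥0∞) < newtonPotential φ x} ≤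
      8 * sphereMeasure univ * (∫⁻ y, φ y) ^ 3 := by
  obtain ⟨i, hi⟩ : ∃ i : ℝ≥0, ∫⁻ y, φ y = i := ⟨_, (ENNReal.coe_toNNReal hI).symm⟩
  -- at this radius the far part of the kernel contributes at most `α / 2`
  obtain ⟨R, hR⟩ : ∃ R : ℝ≥0, R = 2 * i / α := ⟨_, rfl⟩
  have hfar : (i : ℝ≥0∞) * (ENNReal.ofReal R)⁻¹ ≤ ((α / 2 : ℝ≥0) : ℝ≥0∞) := by
    rw [ENNReal.ofReal_coe_nnreal, ← div_eq_mul_inv]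
    refine ENNReal.div_le_of_le_mul (le_of_eq ?_)
    rw [← ENNReal.coe_mul, hR]
    congr 1
    field_simp
  have hweak := mul_volume_lt_newtonPotential_le hφ R ((α / 2 : ℝ≥0) : ℝ≥0∞)
  rw [hi] at hweak ⊢
  set S := {x | ((α / 2 : ℝ≥0) : ℝ≥0∞) + i * (ENNReal.ofReal R)⁻¹ < newtonPotential φ x}
  have hsub : {x | (α : ℝ≥0∞) < newtonPotential φ x} ⊆ S := by
    refine fun x (hx : (α : ℝ≥0∞) < _) => lt_of_le_of_lt ?_ hx
    calc ((α / 2 : ℝ≥0) : ℝ≥0∞) + i * (ENNReal.ofReal R)⁻¹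
        ≤ ((α / 2 : ℝ≥0) : ℝ≥0∞) + ((α / 2 : ℝ≥0) : ℝ≥0∞) := by gcongr
      _ = α := by rw [← ENNReal.coe_add, add_halves]
  calc (α : ℝ≥0∞) ^ 3 * volume {x | (α : ℝ≥0∞) < newtonPotential φ x}
      ≤ ((2 * α ^ 2 : ℝ≥0) : ℝ≥0∞) * (((α / 2 : ℝ≥0) : ℝ≥0∞) * volume S) := by
        rw [← mul_assoc, ← ENNReal.coe_pow, ← ENNReal.coe_mul]
        gcongr
        exact le_of_eq (by field_simp)
    _ ≤ ((2 * α ^ 2 : ℝ≥0) : ℝ≥0∞) * (i * (sphereMeasure univ * ENNReal.ofReal R ^ 2)) := by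
        gcongr
    _ = sphereMeasure univ * ((2 * α ^ 2 * (i * R ^ 2) : ℝ≥0) : ℝ≥0∞) := by
        rw [ENNReal.ofReal_coe_nnreal]; push_cast; ring
    _ = 8 * sphereMeasure univ * (i : ℝ≥0∞) ^ 3 := by
        rw [show 2 * α ^ 2 * (i * R ^ 2) = 8 * i ^ 3 by rw [hR]; field_simp; ring]
        push_cast; ring

theorem weakL3Norm_newtonPotential_le {φ : R3 → ℝ≥0∞} (hφ : Measurable φ)
    (hI : ∫⁻ y, φ y ≠ ∞) :
    weakL3Norm (newtonPotential φ) ≤ ENNReal.ofReal ((32 * π) ^ ((1 : ℝ) / 3)) * ∫⁻ y, φ y := by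
  have hconst : ENNReal.ofReal ((32 * π) ^ ((1 : ℝ) / 3)) =
      (8 * sphereMeasure univ) ^ ((1 : ℝ) / 3) := by
    rw [← ENNReal.ofReal_rpow_of_nonneg (by positivity) (by norm_num), sphereMeasure_univ,
      ← ENNReal.ofReal_ofNat 8, ← ENNReal.ofReal_mul (by norm_num)]
    ring_nf
  rw [hconst]
  exact weakL3Norm_le_of_forall_pow_three_mul_le fun α hα =>
    pow_three_mul_volume_lt_newtonPotential_le hφ hI hα

theorem sine_reversed_weakL3_L1_estimate :
    ∃ C : ℝ, 0 < C ∧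
      ∀ f : R3 → ℂ, Integrable f volume →
        weakL3Norm (fun x => ∫⁻ t in Set.Ioi (0 : ℝ), (‖sinProp f t x‖₊ : ℝ≥0∞)) ≤
          ENNReal.ofReal C * ∫⁻ y : R3, (‖f y‖₊ : ℝ≥0∞) := by
  refine ⟨(32 * π) ^ ((1 : ℝ) / 3), by positivity, fun f hf => ?_⟩
  obtain ⟨φ, hφ, hfφ, hφf⟩ := hf.aestronglyMeasurable.enorm.exists_measurable_ge_lintegral_eq
  calc weakL3Norm (fun x => ∫⁻ t in Ioi (0 : ℝ), ‖sinProp f t x‖ₑ)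
      ≤ weakL3Norm (newtonPotential φ) :=
        weakL3Norm_mono (lintegral_enorm_sinProp_le_newtonPotential hφ hfφ)
    _ ≤ ENNReal.ofReal ((32 * π) ^ ((1 : ℝ) / 3)) * ∫⁻ y, φ y :=
        weakL3Norm_newtonPotential_le hφ (hφf ▸ hf.hasFiniteIntegral.ne)
    _ = ENNReal.ofReal ((32 * π) ^ ((1 : ℝ) / 3)) * ∫⁻ y, ‖f y‖ₑ := by rw [hφf]
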